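/- Let n ≥ 1, let P_Y be a probability measure on ℝ^n with differentiable density p_Y satisfying ‖∇p_Y(y)‖ ≤ K for all y and some K > 0, and let ỹ ∈ ℝ^n with p_Y(ỹ) = a > 0. Let (μ_y)_{y∈ℝ^n} be a family of probability measures on ℝ^m with finite first moments, and set k = a/(2K) + ‖ỹ‖. Assume: (i) there is C_k < ∞ with W₁(μ_{y₁}, μ_{y₂}) ≤ C_k‖y₁ − y₂‖ for all ‖y₁‖, ‖y₂‖ ≤ k; (ii) P_Z is a probability measure on ℝ^d and G : ℝ^n × ℝ^d → ℝ^m is such that every pushforward G(y,·)_#P_Z has finite first moment, y ↦ G(y,z) is differentiable with ‖∇_y G(y,z)‖ ≤ L_k for all z ∈ supp(P_Z) and all ‖y‖ ≤ k, for some L_k > 0; (iii) the function y ↦ W₁(μ_y, G(y,·)_#P_Z) is measurable and ∫ W₁(μ_y, G(y,·)_#P_Z) dP_Y(y) ≤ ε for some ε > 0 satisfying ε ≤ (a/(2K))^{n+1}·(L_k + C_k)·S_n·a/(2n). Then W₁(μ_{ỹ}, G(ỹ,·)_#P_Z) ≤ (L_k + C_k)^{n/(n+1)}·(1 + 1/n)·(2n/(S_n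 a))^{1/(n+1)}·ε^{1/(n+1)}, where S_n = π^{n/2}/Γ(n/2 + 1). -/

import Mathlib

open MeasureTheory Filter Topology Matrix

/-- The Wasserstein-1 distance: infimum over couplings of the expected distance. -/
noncomputable def W1 {E : Type*} [MeasurableSpace E] [NormedAddCommGroup E]
    (μ ν : Measure E) : ℝ :=
  (⨅ π ∈ {π : Measure (E × E) |
      π.map Prod.fst = μ ∧ π.map Prod.snd = ν ∧ IsProbabilityMeasure π},
    ∫⁻ p, ‖p.1 - p.2‖₊ ∂π).toReal

/-- A measure has finite first moment. -/
def HasFiniteFirstMoment {E : Type*} [MeasurableSpace E] [NormedAddCommGroup E]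
    (μ : Measure E) : Prop :=
  ∫⁻ x, ‖x‖₊ ∂μ ≠ ⊤

/-- Lebesgue volume of the unit ball in ℝ^n. -/
noncomputable def Sn (n : ℕ) : ℝ := Real.pi ^ ((n : ℝ) / 2) / Real.Gamma ((n : ℝ) / 2 + 1)

/-- The (topological) support of a measure: points all of whose open neighborhoods
have positive measure. -/
def measSupport {E : Type*} [TopologicalSpace E] [MeasurableSpace E]
    (μ : Measure E) : Set E := {x | ∀ U : Set E, IsOpen U → x ∈ U → 0 < μ U}

/-!
Since `‖∇p_Y‖ ≤ K`, the density stays above `a/2` on the ball `B(ỹ, δ)` for every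
`δ ≤ a/(2K)`, so `P_Y(B) ≥ (a/2) S_n δⁿ`, and by the first moment method some `y ∈ B` has
`W₁(μ_y, G(y,·)_#P_Z) ≤ ε / P_Y(B)`. The triangle inequality for `W₁` (gluing two couplings along
a disintegration of the second one) together with the Lipschitz constants `C_k` and `L_k` then
gives `W₁(μ_ỹ, G(ỹ,·)_#P_Z) ≤ (L_k + C_k) δ + 2ε / (a S_n δⁿ)`. The bound is this estimate at the
minimising radius `δ = (2nε / ((L_k + C_k) S_n a))^{1/(n+1)}`, and the hypothesis on `ε` says
exactly that this radius is at most `a/(2K)`.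
-/

open ProbabilityTheory Set
open scoped ENNReal

section Gluing

variable {α β γ : Type*} [MeasurableSpace α] [MeasurableSpace β] [MeasurableSpace γ]

lemma map_compProd_comap_snd (π : Measure (α × β)) [SFinite π] (κ : Kernel β γ)
    [IsSFiniteKernel κ] :
    (π ⊗ₘ κ.comap Prod.snd measurable_snd).map (fun q => (q.1.2, q.2)) = π.snd ⊗ₘ κ := by
  refine Measure.ext_of_lintegral _ fun f hf => ?_
  rw [lintegral_map hf (by fun_prop),
    Measure.lintegral_compProd (f := fun q : (α × β) × γ => f (q.1.2, q.2)) (by fun_prop),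
    Measure.lintegral_compProd hf, Measure.snd,
    lintegral_map (hf.lintegral_kernel_prod_right') measurable_snd]
  rfl

variable [StandardBorelSpace γ] [Nonempty γ]

lemma exists_gluing (π₁ : Measure (α × β)) (π₂ : Measure (β × γ)) [IsProbabilityMeasure π₁]
    [IsFiniteMeasure π₂] (h : π₁.snd = π₂.fst) :
    ∃ τ : Measure ((α × β) × γ), IsProbabilityMeasure τ ∧ τ.fst = π₁ ∧
      τ.map (fun q => (q.1.2, q.2)) = π₂ := by
  refine ⟨π₁ ⊗ₘ π₂.condKernel.comap Prod.snd measurable_snd, inferInstance,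
    Measure.fst_compProd _ _, ?_⟩
  rw [map_compProd_comap_snd, h, Measure.disintegrate]

end Gluing

section Wasserstein

variable {E : Type*} [MeasurableSpace E]

def couplings (μ ν : Measure E) : Set (Measure (E × E)) :=
  {π | π.map Prod.fst = μ ∧ π.map Prod.snd = ν ∧ IsProbabilityMeasure π}

lemma prod_mem_couplings (μ ν : Measure E) [IsProbabilityMeasure μ] [IsProbabilityMeasure ν] :
    μ.prod ν ∈ couplings μ ν :=
  ⟨by simp, by simp, inferInstance⟩

variable [NormedAddCommGroup E]

noncomputable def eW1 (μ ν : Measure E) : ℝ≥0∞ :=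
  ⨅ π ∈ couplings μ ν, ∫⁻ p, ‖p.1 - p.2‖₊ ∂π

lemma W1_eq_toReal_eW1 (μ ν : Measure E) : W1 μ ν = (eW1 μ ν).toReal := rfl

lemma W1_nonneg (μ ν : Measure E) : 0 ≤ W1 μ ν := ENNReal.toReal_nonneg

lemma eW1_le_lintegral {μ ν : Measure E} {π : Measure (E × E)} (hπ : π ∈ couplings μ ν) :
    eW1 μ ν ≤ ∫⁻ p, ‖p.1 - p.2‖₊ ∂π :=
  iInf₂_le π hπ

lemma W1_le_of_mem_couplings {μ ν : Measure E} {π : Measure (E × E)} (hπ : π ∈ couplings μ ν)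
    {c : ℝ} (hc : 0 ≤ c) (hcost : ∫⁻ p, ‖p.1 - p.2‖₊ ∂π ≤ ENNReal.ofReal c) : W1 μ ν ≤ c :=
  ENNReal.toReal_le_of_le_ofReal hc ((eW1_le_lintegral hπ).trans hcost)

variable [BorelSpace E]

lemma lintegral_nnnorm_sub_le_add {μ ν : Measure E} {π : Measure (E × E)}
    (hπ : π ∈ couplings μ ν) :
    ∫⁻ p, ‖p.1 - p.2‖₊ ∂π ≤ (∫⁻ x, ‖x‖₊ ∂μ) + ∫⁻ x, ‖x‖₊ ∂ν := by
  obtain ⟨rfl, rfl, -⟩ := hπ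
  rw [lintegral_map (by fun_prop) measurable_fst, lintegral_map (by fun_prop) measurable_snd,
    ← lintegral_add_left (by fun_prop)]
  gcongr with p
  exact_mod_cast nnnorm_sub_le p.1 p.2

lemma eW1_ne_top {μ ν : Measure E} [IsProbabilityMeasure μ] [IsProbabilityMeasure ν]
    (hμ : HasFiniteFirstMoment μ) (hν : HasFiniteFirstMoment ν) : eW1 μ ν ≠ ⊤ :=
  ne_top_of_le_ne_top (ENNReal.add_ne_top.mpr ⟨hμ, hν⟩)
    ((eW1_le_lintegral (prod_mem_couplings μ ν)).trans
      (lintegral_nnnorm_sub_le_add (prod_mem_couplings μ ν)))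

variable [SecondCountableTopology E]

lemma W1_map_le_of_ae_norm_sub_le {Z : Type*} [MeasurableSpace Z] (P : Measure Z)
    [IsProbabilityMeasure P] {f g : Z → E} (hf : Measurable f) (hg : Measurable g) {c : ℝ}
    (hc : 0 ≤ c) (hfg : ∀ᵐ z ∂P, ‖f z - g z‖ ≤ c) : W1 (P.map f) (P.map g) ≤ c := by
  have hfg' : Measurable fun z => (f z, g z) := hf.prodMk hg
  refine W1_le_of_mem_couplings (π := P.map fun z => (f z, g z))
    ⟨Measure.map_map measurable_fst hfg', Measure.map_map measurable_snd hfg',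
      Measure.isProbabilityMeasure_map hfg'.aemeasurable⟩ hc ?_
  rw [lintegral_map (by fun_prop) hfg']
  calc ∫⁻ z, ‖f z - g z‖₊ ∂P ≤ ∫⁻ _, ENNReal.ofReal c ∂P := by
        refine lintegral_mono_ae (hfg.mono fun z hz => ?_)
        exact (ENNReal.le_ofReal_iff_toReal_le ENNReal.coe_ne_top hc).2 hz
    _ = ENNReal.ofReal c := by simp

variable [CompleteSpace E]

lemma exists_mem_couplings_lintegral_le_add {μ ρ ν : Measure E} {π₁ π₂ : Measure (E × E)}
    (h₁ : π₁ ∈ couplings μ ρ) (h₂ : π₂ ∈ couplings ρ ν) :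
    ∃ π ∈ couplings μ ν,
      ∫⁻ p, ‖p.1 - p.2‖₊ ∂π ≤ (∫⁻ p, ‖p.1 - p.2‖₊ ∂π₁) + ∫⁻ p, ‖p.1 - p.2‖₊ ∂π₂ := by
  obtain ⟨h₁fst, h₁snd, h₁prob⟩ := h₁
  obtain ⟨h₂fst, h₂snd, h₂prob⟩ := h₂
  obtain ⟨τ, hτprob, hτ₁, hτ₂⟩ :=
    exists_gluing π₁ π₂ (h₁snd.trans h₂fst.symm : π₁.snd = π₂.fst)
  have hτ₁' : τ.map Prod.fst = π₁ := hτ₁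
  refine ⟨τ.map fun q => (q.1.1, q.2), ⟨?_, ?_, Measure.isProbabilityMeasure_map (by fun_prop)⟩,
    ?_⟩
  · rw [Measure.map_map measurable_fst (by fun_prop), ← h₁fst, ← hτ₁',
      Measure.map_map measurable_fst measurable_fst]
    rfl
  · rw [Measure.map_map measurable_snd (by fun_prop), ← h₂snd, ← hτ₂,
      Measure.map_map measurable_snd (by fun_prop)]
    rfl
  · rw [lintegral_map (by fun_prop) (by fun_prop), ← hτ₁', ← hτ₂,
      lintegral_map (by fun_prop) (by fun_prop), lintegral_map (by fun_prop) (by fun_prop),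
      ← lintegral_add_left (by fun_prop)]
    gcongr with q
    have h := nnnorm_add_le (q.1.1 - q.1.2) (q.1.2 - q.2)
    rw [sub_add_sub_cancel] at h
    exact_mod_cast h

lemma eW1_triangle (μ ρ ν : Measure E) (hμρ : eW1 μ ρ ≠ ⊤) (hρν : eW1 ρ ν ≠ ⊤) :
    eW1 μ ν ≤ eW1 μ ρ + eW1 ρ ν := by
  refine ENNReal.le_of_forall_pos_le_add fun η hη _ => ?_
  have hη2 : (η / 2 : ℝ≥0∞) ≠ 0 := by simpa using hη.ne'
  obtain ⟨π₁, hπ₁, hc₁⟩ : ∃ π ∈ couplings μ ρ, ∫⁻ p, ‖p.1 - p.2‖₊ ∂π < eW1 μ ρ + η / 2 := by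
    simpa only [eW1, iInf_lt_iff, exists_prop] using ENNReal.lt_add_right hμρ hη2
  obtain ⟨π₂, hπ₂, hc₂⟩ : ∃ π ∈ couplings ρ ν, ∫⁻ p, ‖p.1 - p.2‖₊ ∂π < eW1 ρ ν + η / 2 := by
    simpa only [eW1, iInf_lt_iff, exists_prop] using ENNReal.lt_add_right hρν hη2
  obtain ⟨π, hπ, hcost⟩ := exists_mem_couplings_lintegral_le_add hπ₁ hπ₂
  calc eW1 μ ν ≤ (eW1 μ ρ + η / 2) + (eW1 ρ ν + η / 2) :=
        (eW1_le_lintegral hπ).trans (hcost.trans (add_le_add hc₁.le hc₂.le))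
    _ = eW1 μ ρ + eW1 ρ ν + η := by rw [add_add_add_comm, ENNReal.add_halves]

lemma W1_triangle {μ ρ ν : Measure E}
    [IsProbabilityMeasure μ] [IsProbabilityMeasure ρ] [IsProbabilityMeasure ν]
    (hμ : HasFiniteFirstMoment μ) (hρ : HasFiniteFirstMoment ρ) (hν : HasFiniteFirstMoment ν) :
    W1 μ ν ≤ W1 μ ρ + W1 ρ ν := by
  have hμρ := eW1_ne_top hμ hρ
  have hρν := eW1_ne_top hρ hν
  simp only [W1_eq_toReal_eW1]
  rw [← ENNReal.toReal_add hμρ hρν]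
  exact ENNReal.toReal_mono (ENNReal.add_ne_top.mpr ⟨hμρ, hρν⟩) (eW1_triangle μ ρ ν hμρ hρν)

end Wasserstein

lemma measSupport_eq_support {X : Type*} [TopologicalSpace X] [MeasurableSpace X]
    (μ : Measure X) : measSupport μ = μ.support := by
  rw [Measure.support_eq_forall_isOpen]
  ext x
  exact forall_congr' fun U => Imp.swap

lemma ae_mem_measSupport {X : Type*} [TopologicalSpace X] [MeasurableSpace X]
    [HereditarilyLindelofSpace X] (μ : Measure X) : ∀ᵐ x ∂μ, x ∈ measSupport μ := by
  rw [measSupport_eq_support]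
  exact Measure.support_mem_ae

lemma Sn_pos (n : ℕ) : 0 < Sn n :=
  div_pos (Real.rpow_pos_of_pos Real.pi_pos _) (Real.Gamma_pos_of_pos (by positivity))

lemma volume_ball_eq_Sn {n : ℕ} [NeZero n] (x : EuclideanSpace ℝ (Fin n)) {r : ℝ} (hr : 0 ≤ r) :
    volume (Metric.ball x r) = ENNReal.ofReal (Sn n * r ^ n) := by
  have hsqrt : Real.sqrt Real.pi ^ n = Real.pi ^ ((n : ℝ) / 2) := by
    rw [Real.sqrt_eq_rpow, ← Real.rpow_natCast, ← Real.rpow_mul Real.pi_pos.le]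
    ring_nf
  rw [EuclideanSpace.volume_ball, Fintype.card_fin, ← ENNReal.ofReal_pow hr,
    ← ENNReal.ofReal_mul (by positivity), hsqrt, Sn, mul_comm]

lemma ofReal_le_withDensity_ball {n : ℕ} [NeZero n] {p : EuclideanSpace ℝ (Fin n) → ℝ}
    {x : EuclideanSpace ℝ (Fin n)} {c r : ℝ} (hc : 0 ≤ c) (hr : 0 ≤ r)
    (hp : ∀ y ∈ Metric.ball x r, c ≤ p y) :
    ENNReal.ofReal (c * (Sn n * r ^ n)) ≤
      volume.withDensity (fun y => ENNReal.ofReal (p y)) (Metric.ball x r) := by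
  rw [withDensity_apply _ measurableSet_ball, ENNReal.ofReal_mul hc, ← volume_ball_eq_Sn x hr,
    ← setLIntegral_const]
  exact setLIntegral_mono' measurableSet_ball fun y hy => ENNReal.ofReal_le_ofReal (hp y hy)

lemma half_mul_le_withDensity_ball {n : ℕ} [NeZero n] {p : EuclideanSpace ℝ (Fin n) → ℝ}
    {Dp : EuclideanSpace ℝ (Fin n) → EuclideanSpace ℝ (Fin n) →L[ℝ] ℝ} {K : ℝ} (hK : 0 < K)
    (hp : ∀ y, HasFDerivAt p (Dp y) y) (hDp : ∀ y, ‖Dp y‖ ≤ K) {x : EuclideanSpace ℝ (Fin n)}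
    {δ : ℝ} (hδ : 0 ≤ δ) (hδK : δ ≤ p x / (2 * K)) :
    ENNReal.ofReal (p x / 2 * (Sn n * δ ^ n)) ≤
      volume.withDensity (fun y => ENNReal.ofReal (p y)) (Metric.ball x δ) := by
  have hKδ := (le_div_iff₀ (by positivity)).1 hδK
  refine ofReal_le_withDensity_ball (by nlinarith) hδ fun y hy => ?_
  have hlip := convex_univ.norm_image_sub_le_of_norm_hasFDerivWithin_le
    (fun z _ => (hp z).hasFDerivWithinAt) (fun z _ => hDp z) (mem_univ x) (mem_univ y)
  have := mul_le_mul_of_nonneg_left (mem_ball_iff_norm.1 hy).le hK.le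
  linarith [(abs_le.1 (Real.norm_eq_abs _ ▸ hlip)).1]

lemma exists_mem_le_div_of_lintegral_le {α : Type*} [MeasurableSpace α] (μ : Measure α)
    [IsFiniteMeasure μ] {s : Set α} (hs : MeasurableSet s) {f : α → ℝ} (hf : Measurable f)
    {ε c : ℝ} (hε : 0 ≤ ε) (hc : 0 < c) (hcs : ENNReal.ofReal c ≤ μ s)
    (hint : ∫⁻ x, ENNReal.ofReal (f x) ∂μ ≤ ENNReal.ofReal ε) : ∃ x ∈ s, f x ≤ ε / c := by
  have hμs : μ.restrict s ≠ 0 := by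
    rw [Ne, Measure.restrict_eq_zero]
    exact (lt_of_lt_of_le (ENNReal.ofReal_pos.2 hc) hcs).ne'
  obtain ⟨x, hxs, hx⟩ := exists_notMem_null_le_laverage hμs
    (ENNReal.measurable_ofReal.comp hf).aemeasurable (N := sᶜ)
    (by simp [Measure.restrict_apply hs.compl])
  refine ⟨x, not_not.1 hxs, (ENNReal.ofReal_le_ofReal_iff (by positivity)).1 ?_⟩
  calc ENNReal.ofReal (f x) ≤ (∫⁻ x in s, ENNReal.ofReal (f x) ∂μ) / μ s := by
        simpa [laverage_eq] using hx
    _ ≤ ENNReal.ofReal ε / ENNReal.ofReal c :=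
        ENNReal.div_le_div ((setLIntegral_le_lintegral _ _).trans hint) hcs
    _ = ENNReal.ofReal (ε / c) := (ENNReal.ofReal_div_of_pos hc).symm

lemma exists_radius_le_add_div_eq {n : ℕ} (hn : n ≠ 0) {L A ε r : ℝ} (hL : 0 < L) (hA : 0 < A)
    (hε : 0 < ε) (hr : 0 ≤ r) (hεr : ε ≤ r ^ (n + 1) * (L * A) / (2 * n)) :
    ∃ δ, 0 < δ ∧ δ ≤ r ∧ L * δ + 2 * ε / (A * δ ^ n) =
      L ^ ((n : ℝ) / ((n : ℝ) + 1)) * (1 + 1 / (n : ℝ)) *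
        (2 * n / A) ^ (1 / ((n : ℝ) + 1)) * ε ^ (1 / ((n : ℝ) + 1)) := by
  set p : ℝ := 1 / ((n : ℝ) + 1)
  set T : ℝ := 2 * n / A * ε * L⁻¹
  have hT : 0 < T := by positivity
  have hδpow : (T ^ p) ^ (n + 1) = T := by
    rw [← Real.rpow_natCast, ← Real.rpow_mul hT.le]
    push_cast
    rw [div_mul_cancel₀ _ (by positivity), Real.rpow_one]
  refine ⟨T ^ p, by positivity, ?_, ?_⟩
  · refine (pow_le_pow_iff_left₀ (by positivity) hr n.add_one_ne_zero).1 ?_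
    rw [le_div_iff₀ (by positivity)] at hεr
    rw [hδpow, show T = 2 * n * ε / (L * A) by simp only [T]; field_simp,
      div_le_iff₀ (by positivity)]
    linarith
  · have hLp : L * (L⁻¹) ^ p = L ^ ((n : ℝ) / ((n : ℝ) + 1)) := by
      rw [Real.inv_rpow hL.le, ← Real.rpow_neg hL.le]
      calc L * L ^ (-p) = L ^ (1 + -p) := by rw [Real.rpow_add hL, Real.rpow_one]
        _ = _ := by congr 1; simp only [p]; field_simp; ring
    have hsum : 2 * ε / (A * (T ^ p) ^ n) = L * T ^ p / n := by
      have hTLA : T * L * A = 2 * n * ε := by simp only [T]; field_simp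
      rw [pow_succ] at hδpow
      rw [div_eq_div_iff (by positivity) (by positivity)]
      linear_combination (-(L * A)) * hδpow - hTLA
    rw [hsum, Real.mul_rpow (by positivity) (by positivity),
      Real.mul_rpow (by positivity) (by positivity), ← hLp]
    field_simp

lemma nonneg_of_le_mul_norm_sub {F : Type*} [NormedAddCommGroup F] [NormedSpace ℝ F]
    [Nontrivial F] {d : F → F → ℝ} {C k : ℝ} (hk : 0 < k) (hd : ∀ y₁ y₂, 0 ≤ d y₁ y₂)
    (hC : ∀ y₁ y₂ : F, ‖y₁‖ ≤ k → ‖y₂‖ ≤ k → d y₁ y₂ ≤ C * ‖y₁ - y₂‖) : 0 ≤ C := by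
  obtain ⟨y, hy⟩ := exists_norm_eq F hk.le
  have h := (hd y 0).trans (hC y 0 hy.le (by simpa using hk.le))
  rw [sub_zero, hy] at h
  exact nonneg_of_mul_nonneg_left h hk

lemma W1_map_le_mul_norm_sub {F Z E : Type*} [NormedAddCommGroup F] [NormedSpace ℝ F]
    [TopologicalSpace Z] [MeasurableSpace Z] [HereditarilyLindelofSpace Z]
    [NormedAddCommGroup E] [NormedSpace ℝ E] [MeasurableSpace E] [BorelSpace E]
    [SecondCountableTopology E] (P : Measure Z) [IsProbabilityMeasure P] {G : F → Z → E}
    (hG : ∀ y, Measurable (G y)) {DG : F → Z → F →L[ℝ] E} {s : Set F} (hs : Convex ℝ s) {L : ℝ}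
    (hL : 0 ≤ L) (hDG : ∀ z ∈ measSupport P, ∀ y ∈ s,
      HasFDerivAt (fun y' => G y' z) (DG y z) y ∧ ‖DG y z‖ ≤ L)
    {y₁ y₂ : F} (h₁ : y₁ ∈ s) (h₂ : y₂ ∈ s) :
    W1 (P.map (G y₁)) (P.map (G y₂)) ≤ L * ‖y₁ - y₂‖ := by
  refine W1_map_le_of_ae_norm_sub_le P (hG y₁) (hG y₂) (by positivity) ?_
  filter_upwards [ae_mem_measSupport P] with z hz
  exact hs.norm_image_sub_le_of_norm_hasFDerivWithin_le (f := fun y' => G y' z)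
    (fun y hy => (hDG z hz y hy).1.hasFDerivWithinAt) (fun y hy => (hDG z hz y hy).2) h₂ h₁

/-- pointwise Wasserstein bound, optimized radius version. -/
theorem stmt_7 {n m d : ℕ} (hn : 1 ≤ n)
    (pY : EuclideanSpace ℝ (Fin n) → ℝ)
    (PY : Measure (EuclideanSpace ℝ (Fin n)))
    (hPYprob : IsProbabilityMeasure PY)
    (hPY : PY = volume.withDensity (fun y => ENNReal.ofReal (pY y)))
    (K : ℝ) (hK : 0 < K)
    (DY : EuclideanSpace ℝ (Fin n) → (EuclideanSpace ℝ (Fin n) →L[ℝ] ℝ))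
    (hderivY : ∀ y, HasFDerivAt pY (DY y) y)
    (hDYbound : ∀ y, ‖DY y‖ ≤ K)
    (ytil : EuclideanSpace ℝ (Fin n)) (a : ℝ) (ha : 0 < a) (hpa : pY ytil = a)
    (μ : EuclideanSpace ℝ (Fin n) → Measure (EuclideanSpace ℝ (Fin m)))
    (hμprob : ∀ y, IsProbabilityMeasure (μ y))
    (hμmom : ∀ y, HasFiniteFirstMoment (μ y))
    (k : ℝ) (hk : k = a / (2 * K) + ‖ytil‖)
    (Ck : ℝ)
    (hCk : ∀ y₁ y₂ : EuclideanSpace ℝ (Fin n), ‖y₁‖ ≤ k → ‖y₂‖ ≤ k →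
      W1 (μ y₁) (μ y₂) ≤ Ck * ‖y₁ - y₂‖)
    (PZ : Measure (EuclideanSpace ℝ (Fin d))) (hPZprob : IsProbabilityMeasure PZ)
    (G : EuclideanSpace ℝ (Fin n) → EuclideanSpace ℝ (Fin d) → EuclideanSpace ℝ (Fin m))
    (hGmeas : ∀ y : EuclideanSpace ℝ (Fin n), Measurable (G y))
    (hGmom : ∀ y : EuclideanSpace ℝ (Fin n), HasFiniteFirstMoment (PZ.map (G y)))
    (Lk : ℝ) (hLk : 0 < Lk)
    (DG : EuclideanSpace ℝ (Fin n) → EuclideanSpace ℝ (Fin d) →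
      (EuclideanSpace ℝ (Fin n) →L[ℝ] EuclideanSpace ℝ (Fin m)))
    (hderivG : ∀ z ∈ measSupport PZ, ∀ y : EuclideanSpace ℝ (Fin n), ‖y‖ ≤ k →
      HasFDerivAt (fun y' => G y' z) (DG y z) y ∧ ‖DG y z‖ ≤ Lk)
    (hWmeas : Measurable fun y => W1 (μ y) (PZ.map (G y)))
    (ε : ℝ) (hε0 : 0 < ε)
    (hεle : ε ≤ (a / (2 * K)) ^ (n + 1) * ((Lk + Ck) * Sn n * a) / (2 * n))
    (hint : ∫⁻ y, ENNReal.ofReal (W1 (μ y) (PZ.map (G y))) ∂PY ≤ ENNReal.ofReal ε) :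
    W1 (μ ytil) (PZ.map (G ytil)) ≤
      (Lk + Ck) ^ ((n : ℝ) / ((n : ℝ) + 1)) * (1 + 1 / (n : ℝ)) *
        (2 * n / (Sn n * a)) ^ (1 / ((n : ℝ) + 1)) * ε ^ (1 / ((n : ℝ) + 1)) := by
  have : NeZero n := ⟨by omega⟩
  have hr : 0 < a / (2 * K) := by positivity
  have hytil : ‖ytil‖ ≤ k := by rw [hk]; linarith
  have hCk0 : 0 ≤ Ck := nonneg_of_le_mul_norm_sub (by linarith [norm_nonneg ytil] : 0 < k)
    (fun _ _ => W1_nonneg _ _) hCk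
  obtain ⟨δ, hδ, hδr, hδeq⟩ := exists_radius_le_add_div_eq (NeZero.ne n)
    (by linarith : 0 < Lk + Ck) (mul_pos (Sn_pos n) ha) hε0 hr.le (by simpa [mul_assoc] using hεle)
  have hmass : ENNReal.ofReal (a / 2 * (Sn n * δ ^ n)) ≤ PY (Metric.ball ytil δ) := by
    rw [hPY, ← hpa]
    exact half_mul_le_withDensity_ball hK hderivY hDYbound hδ.le (hpa ▸ hδr)
  obtain ⟨y, hyB, hyW⟩ := exists_mem_le_div_of_lintegral_le PY measurableSet_ball hWmeas
    hε0.le (mul_pos (half_pos ha) (mul_pos (Sn_pos n) (pow_pos hδ n))) hmass hint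
  have hyδ : ‖y - ytil‖ < δ := mem_ball_iff_norm.1 hyB
  have hyk : ‖y‖ ≤ k := by
    rw [hk]; linarith [norm_le_norm_add_norm_sub' y ytil]
  have hGlip : W1 (PZ.map (G y)) (PZ.map (G ytil)) ≤ Lk * δ :=
    (W1_map_le_mul_norm_sub PZ hGmeas (convex_closedBall 0 k) hLk.le
      (fun z hz y' hy' => hderivG z hz y' (mem_closedBall_zero_iff.1 hy'))
      (mem_closedBall_zero_iff.2 hyk) (mem_closedBall_zero_iff.2 hytil)).trans (by gcongr)
  have hμlip : W1 (μ ytil) (μ y) ≤ Ck * δ :=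
    (hCk ytil y hytil hyk).trans (by rw [norm_sub_rev]; gcongr)
  have hν (y) : IsProbabilityMeasure (PZ.map (G y)) :=
    Measure.isProbabilityMeasure_map (hGmeas y).aemeasurable
  calc W1 (μ ytil) (PZ.map (G ytil))
      ≤ W1 (μ ytil) (μ y) + (W1 (μ y) (PZ.map (G y)) + W1 (PZ.map (G y)) (PZ.map (G ytil))) :=
        (W1_triangle (hμmom ytil) (hμmom y) (hGmom ytil)).trans
          (add_le_add_right (W1_triangle (hμmom y) (hGmom y) (hGmom ytil)) _)
    _ ≤ Ck * δ + (ε / (a / 2 * (Sn n * δ ^ n)) + Lk * δ) := by gcongr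
    _ = (Lk + Ck) * δ + 2 * ε / (Sn n * a * δ ^ n) := by field_simp; ring
    _ = _ := hδeq
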